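/- arXiv:2601.18575 — 8 statements merged into one kernel-verified Lean document; each statement's English description precedes it below -/
import Mathlib

section
/- Let n ≥ 1, let v : ℝ → ℝⁿ → ℝⁿ be bounded and twice continuously differentiable jointly in (t, x), and let X : ℝ → ℝⁿ → ℝⁿ be a flow of v that is twice continuously differentiable jointly in (t, x). Then for every x ∈ ℝⁿ the map t ↦ det(D_x X(t, x)) (the determinant of the Fréchet derivative of X(t, ·) at x) is differentiable in t, and for all t ∈ ℝ, x ∈ ℝⁿ: ∂/∂t det(D_x X(t, x)) = det(D_x X(t, x)) · (∇·v_t)(X(t, x)). -/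
/-!
Differentiating `∂ₜX = v(t, X)` in space and exchanging the mixed partials (`X` is `C²`) gives the
variational equation `∂ₜ DₓX = Dₓv(t, X) ∘ DₓX`. Jacobi's formula then yields
`∂ₜ det DₓX = det DₓX · tr Dₓv(t, X)`: along `s ↦ (1 + sB) ∘ A`, the determinant is
`det (1 + sB) · det A`, and `det (1 + sB)` is a polynomial in `s` with linear coefficient `tr B`.
-/

open MeasureTheory

/-- The divergence of a vector field `w` at `y`: the trace of its Fréchet derivative at `y`. -/
noncomputable def divg {n : ℕ}
    (w : EuclideanSpace ℝ (Fin n) → EuclideanSpace ℝ (Fin n))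
    (y : EuclideanSpace ℝ (Fin n)) : ℝ :=
  LinearMap.trace ℝ (EuclideanSpace ℝ (Fin n)) (fderiv ℝ w y).toLinearMap

open ContinuousLinearMap Polynomial

theorem Matrix.hasDerivAt_det_one_add_smul {𝕜 ι : Type*} [NontriviallyNormedField 𝕜] [Fintype ι]
    [DecidableEq ι] (M : Matrix ι ι 𝕜) :
    HasDerivAt (fun s : 𝕜 => (1 + s • M).det) M.trace 0 := by
  have h := (det (1 + (X : 𝕜[X]) • M.map C)).hasDerivAt 0
  rw [derivative_det_one_add_X_smul] at h
  convert h using 1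
  ext s
  rw [← coe_evalRingHom, RingHom.map_det]
  congr 1
  ext i j
  simpa [Matrix.one_apply, apply_ite] using mul_comm s (M i j)

theorem LinearMap.hasDerivAt_det_one_add_smul {𝕜 E : Type*} [NontriviallyNormedField 𝕜]
    [AddCommGroup E] [Module 𝕜 E] [Module.Free 𝕜 E] [Module.Finite 𝕜 E] (B : E →ₗ[𝕜] E) :
    HasDerivAt (fun s : 𝕜 => LinearMap.det (1 + s • B)) (LinearMap.trace 𝕜 E B) 0 := by
  classical
  let b := Module.Free.chooseBasis 𝕜 E
  rw [LinearMap.trace_eq_matrix_trace 𝕜 b]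
  convert (LinearMap.toMatrix b b B).hasDerivAt_det_one_add_smul using 1
  ext s
  rw [← LinearMap.det_toMatrix b, map_add, map_smul, LinearMap.toMatrix_one]

section Jacobi

variable {𝕜 E : Type*} [NontriviallyNormedField 𝕜] [CompleteSpace 𝕜] [NormedAddCommGroup E]
  [NormedSpace 𝕜 E] [FiniteDimensional 𝕜 E]

theorem ContinuousLinearMap.differentiable_det :
    Differentiable 𝕜 fun A : E →L[𝕜] E => LinearMap.det (A : E →ₗ[𝕜] E) := by
  classical
  let b := Module.finBasis 𝕜 E
  have hdet : (fun A : E →L[𝕜] E => LinearMap.det (A : E →ₗ[𝕜] E)) = fun A =>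
      ∑ σ : Equiv.Perm (Fin (Module.finrank 𝕜 E)),
        (Equiv.Perm.sign σ : 𝕜) * ∏ i, b.equivFunL (A (b i)) (σ i) := by
    ext A
    rw [← LinearMap.det_toMatrix b, Matrix.det_apply]
    simp [LinearMap.toMatrix_apply, Units.smul_def]
  rw [hdet]
  fun_prop

theorem HasDerivAt.linearMap_det_of_comp {A : 𝕜 → E →L[𝕜] E} {B : E →L[𝕜] E} {t : 𝕜}
    (hA : HasDerivAt A (B ∘L A t) t) :
    HasDerivAt (fun s => LinearMap.det (A s : E →ₗ[𝕜] E))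
      (LinearMap.det (A t : E →ₗ[𝕜] E) * LinearMap.trace 𝕜 E B) t := by
  set D := fderiv 𝕜 (fun A : E →L[𝕜] E => LinearMap.det (A : E →ₗ[𝕜] E)) (A t)
  have hD := (ContinuousLinearMap.differentiable_det (A t)).hasFDerivAt (𝕜 := 𝕜)
  suffices D (B ∘L A t) = LinearMap.det (A t : E →ₗ[𝕜] E) * LinearMap.trace 𝕜 E B from
    this ▸ hD.comp_hasDerivAt t hA
  have hline : HasDerivAt (fun s : 𝕜 => A t + s • (B ∘L A t)) (B ∘L A t) 0 := by
    simpa using ((hasDerivAt_id (0 : 𝕜)).smul_const (B ∘L A t)).const_add (A t)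
  have hfactor : (fun s : 𝕜 => LinearMap.det ((A t + s • (B ∘L A t) : E →L[𝕜] E) : E →ₗ[𝕜] E))
      = fun s => LinearMap.det (1 + s • (B : E →ₗ[𝕜] E)) * LinearMap.det (A t : E →ₗ[𝕜] E) := by
    ext s
    rw [← LinearMap.det_comp]
    congr 1
  have hD_line := hD.comp_hasDerivAt_of_eq (0 : 𝕜) hline (by simp)
  have hfactor_deriv := (LinearMap.hasDerivAt_det_one_add_smul (B : E →ₗ[𝕜] E)).mul_const
    (LinearMap.det (A t : E →ₗ[𝕜] E))
  rw [← hfactor] at hfactor_deriv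
  rw [mul_comm]
  exact hD_line.unique hfactor_deriv

end Jacobi

theorem DifferentiableAt.fderiv_comp_prodMk_right {𝕜 G E F : Type*} [NontriviallyNormedField 𝕜]
    [NormedAddCommGroup G] [NormedSpace 𝕜 G] [NormedAddCommGroup E] [NormedSpace 𝕜 E]
    [NormedAddCommGroup F] [NormedSpace 𝕜 F] {f : G × E → F} {a : G} {y : E}
    (hf : DifferentiableAt 𝕜 f (a, y)) :
    fderiv 𝕜 (fun y => f (a, y)) y = fderiv 𝕜 f (a, y) ∘L inr 𝕜 G E :=
  (hf.hasFDerivAt.comp y (hasFDerivAt_prodMk_right a y)).fderiv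

theorem hasDerivAt_fderiv_flow {E : Type*} [NormedAddCommGroup E] [NormedSpace ℝ E]
    {v X : ℝ → E → E} (hv : Differentiable ℝ fun q : ℝ × E => v q.1 q.2)
    (hX : ContDiff ℝ 2 fun q : ℝ × E => X q.1 q.2)
    (hflow : ∀ t x, HasDerivAt (fun s => X s x) (v t (X t x)) t) (t : ℝ) (x : E) :
    HasDerivAt (fun s => fderiv ℝ (X s) x) (fderiv ℝ (v t) (X t x) ∘L fderiv ℝ (X t) x) t := by
  set F := fun q : ℝ × E => X q.1 q.2
  set V := fun q : ℝ × E => v q.1 q.2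
  have hF : Differentiable ℝ F := hX.differentiable two_ne_zero
  have hF' : Differentiable ℝ (fderiv ℝ F) :=
    (hX.fderiv_right one_add_one_eq_two.le).differentiable one_ne_zero
  set W := fderiv ℝ (fderiv ℝ F) (t, x)
  have hW : HasFDerivAt (fderiv ℝ F) W (t, x) := (hF' (t, x)).hasFDerivAt
  have hspace : ∀ s y, fderiv ℝ (X s) y = fderiv ℝ F (s, y) ∘L inr ℝ ℝ E :=
    fun s y => (hF (s, y)).fderiv_comp_prodMk_right
  have htime : ∀ q, fderiv ℝ F q (1, 0) = V (q.1, F q) := by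
    rintro ⟨s, y⟩
    refine HasDerivAt.unique ?_ (hflow s y)
    exact (hF (s, y)).hasFDerivAt.comp_hasDerivAt s
      ((hasDerivAt_id s).prodMk (hasDerivAt_const s y))
  have hderiv : HasDerivAt (fun s => fderiv ℝ (X s) x) (W (1, 0) ∘L inr ℝ ℝ E) t := by
    have hpath : HasDerivAt (fun s => fderiv ℝ F (s, x)) (W (1, 0)) t :=
      hW.comp_hasDerivAt t ((hasDerivAt_id t).prodMk (hasDerivAt_const t x))
    rw [show (fun s => fderiv ℝ (X s) x) = fun s => fderiv ℝ F (s, x) ∘L inr ℝ ℝ E from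
      funext fun s => hspace s x]
    simpa using hpath.clm_comp (hasDerivAt_const t (inr ℝ ℝ E))
  -- Differentiating `htime` at `(t, x)` computes `W (0, h) (1, 0)`.
  have hV : HasFDerivAt (fun q : ℝ × E => V (q.1, F q))
      (fderiv ℝ V (t, F (t, x)) ∘L (fst ℝ ℝ E).prod (fderiv ℝ F (t, x))) (t, x) :=
    HasFDerivAt.comp (g := V) (f := fun q : ℝ × E => (q.1, F q)) (t, x)
      (hv (t, F (t, x))).hasFDerivAt (hasFDerivAt_fst.prodMk (hF (t, x)).hasFDerivAt)
  have hG : HasFDerivAt (fun q : ℝ × E => V (q.1, F q))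
      (apply ℝ E ((1 : ℝ), (0 : E)) ∘L W) (t, x) :=
    funext htime ▸ (apply ℝ E ((1 : ℝ), (0 : E))).hasFDerivAt.comp (t, x) hW
  have hmixed : W (1, 0) ∘L inr ℝ ℝ E = fderiv ℝ (v t) (X t x) ∘L fderiv ℝ (X t) x := by
    ext h
    rw [comp_apply, comp_apply, hspace, (hv (t, F (t, x))).fderiv_comp_prodMk_right]
    calc W (1, 0) (0, h) = W (0, h) (1, 0) :=
          second_derivative_symmetric (fun q => (hF q).hasFDerivAt) hW _ _
      _ = fderiv ℝ V (t, F (t, x)) (0, fderiv ℝ F (t, x) (0, h)) := by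
          simpa using congrArg (· ((0 : ℝ), h)) (hG.unique hV)
  exact hmixed ▸ hderiv

theorem det_fderiv_flow_hasDerivAt_general
    (n : ℕ)
    (v X : ℝ → EuclideanSpace ℝ (Fin n) → EuclideanSpace ℝ (Fin n))
    (hv_smooth : ContDiff ℝ 2 (fun q : ℝ × EuclideanSpace ℝ (Fin n) => v q.1 q.2))
    (hX_smooth : ContDiff ℝ 2 (fun q : ℝ × EuclideanSpace ℝ (Fin n) => X q.1 q.2))
    (hflow : ∀ t x, HasDerivAt (fun s => X s x) (v t (X t x)) t) :
    ∀ (t : ℝ) (x : EuclideanSpace ℝ (Fin n)),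
      HasDerivAt (fun s => LinearMap.det (fderiv ℝ (X s) x).toLinearMap)
        (LinearMap.det (fderiv ℝ (X t) x).toLinearMap * divg (v t) (X t x)) t := by
  intro t x
  have hvariational :=
    hasDerivAt_fderiv_flow (hv_smooth.differentiable two_ne_zero) hX_smooth hflow t x
  exact hvariational.linearMap_det_of_comp

theorem det_fderiv_flow_hasDerivAt
    (n : ℕ) (hn : 1 ≤ n)
    (v X : ℝ → EuclideanSpace ℝ (Fin n) → EuclideanSpace ℝ (Fin n))
    (hv_bdd : ∃ C : ℝ, ∀ t x, ‖v t x‖ ≤ C)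
    (hv_smooth : ContDiff ℝ 2 (fun q : ℝ × EuclideanSpace ℝ (Fin n) => v q.1 q.2))
    (hX_smooth : ContDiff ℝ 2 (fun q : ℝ × EuclideanSpace ℝ (Fin n) => X q.1 q.2))
    (hX0 : ∀ x, X 0 x = x)
    (hflow : ∀ t x, HasDerivAt (fun s => X s x) (v t (X t x)) t) :
    ∀ (t : ℝ) (x : EuclideanSpace ℝ (Fin n)),
      HasDerivAt (fun s => LinearMap.det (fderiv ℝ (X s) x).toLinearMap)
        (LinearMap.det (fderiv ℝ (X t) x).toLinearMap * divg (v t) (X t x)) t :=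
  det_fderiv_flow_hasDerivAt_general n v X hv_smooth hX_smooth hflow
end

section
/- Let n ≥ 1, let v : ℝ → ℝⁿ → ℝⁿ be continuous, differentiable in x, and let X : ℝ → ℝⁿ → ℝⁿ be a flow of v. Suppose p : ℝ → ℝⁿ → ℝ is continuously differentiable jointly in (t, y) and satisfies the continuity equation for v at every point, i.e. ∂p/∂t(t, y) + ∇p_t(y)·v_t(y) + p(t, y)·(∇·v_t)(y) = 0 for all (t, y). Then for every x ∈ ℝⁿ the map t ↦ p(t, X(t, x)) is differentiable and satisfies d/dt [p(t, X(t, x))] = −p(t, X(t, x)) · (∇·v_t)(X(t, x)). -/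
open MeasureTheory
open scoped RealInnerProductSpace

/-!
Along the trajectory `s ↦ X s x`, the chain rule gives
`d/ds p(s, X s x) = ∂ₜp + ∇p_s · v_s`, evaluated at `X s x`; the continuity equation
says that this sum equals `-p · (∇·v_s)` there.
-/

theorem hasDerivAt_comp_graph {𝕜 E G : Type*} [NontriviallyNormedField 𝕜]
    [NormedAddCommGroup E] [NormedSpace 𝕜 E] [NormedAddCommGroup G] [NormedSpace 𝕜 G]
    {p : 𝕜 → E → G} {γ : 𝕜 → E} {w : E} {t : 𝕜}
    (hp : DifferentiableAt 𝕜 (Function.uncurry p) (t, γ t)) (hγ : HasDerivAt γ w t) :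
    HasDerivAt (fun s => p s (γ s))
      (deriv (fun s => p s (γ t)) t + fderiv 𝕜 (p t) (γ t) w) t := by
  set L := fderiv 𝕜 (Function.uncurry p) (t, γ t)
  have hL := hp.hasFDerivAt
  have h_time : HasDerivAt (fun s => p s (γ t)) (L (1, 0)) t :=
    hL.comp_hasDerivAt (f := fun s => (s, γ t)) t
      ((hasDerivAt_id' t).prodMk (hasDerivAt_const t (γ t)))
  have h_space : HasFDerivAt (p t) (L.comp (ContinuousLinearMap.inr 𝕜 𝕜 E)) (γ t) :=
    hL.comp (γ t) (hasFDerivAt_prodMk_right t (γ t))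
  have h_split : L (1, w) = L (1, 0) + L (0, w) := by
    rw [← L.map_add, Prod.mk_add_mk, add_zero, zero_add]
  rw [h_time.deriv, h_space.fderiv, ContinuousLinearMap.comp_apply,
    ContinuousLinearMap.inr_apply, ← h_split]
  exact hL.comp_hasDerivAt t ((hasDerivAt_id' t).prodMk hγ)

theorem density_along_flow_hasDerivAt_general
    (n : ℕ)
    (v X : ℝ → EuclideanSpace ℝ (Fin n) → EuclideanSpace ℝ (Fin n))
    (hflow : ∀ t x, HasDerivAt (fun s => X s x) (v t (X t x)) t)
    (p : ℝ → EuclideanSpace ℝ (Fin n) → ℝ)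
    (hp_smooth : ContDiff ℝ 1 (fun q : ℝ × EuclideanSpace ℝ (Fin n) => p q.1 q.2))
    (hcont_eq : ∀ (t : ℝ) (y : EuclideanSpace ℝ (Fin n)),
      deriv (fun s => p s y) t + ⟪gradient (p t) y, v t y⟫ + p t y * divg (v t) y = 0) :
    ∀ (x : EuclideanSpace ℝ (Fin n)) (t : ℝ),
      HasDerivAt (fun s => p s (X s x))
        (-(p t (X t x) * divg (v t) (X t x))) t := by
  intro x t
  have h_chain :=
    hasDerivAt_comp_graph (hp_smooth.differentiable one_ne_zero (t, X t x)) (hflow t x)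
  have h_cont := hcont_eq t (X t x)
  rw [inner_gradient_left] at h_cont
  exact h_chain.congr_deriv (by linarith)

theorem density_along_flow_hasDerivAt
    (n : ℕ) (hn : 1 ≤ n)
    (v X : ℝ → EuclideanSpace ℝ (Fin n) → EuclideanSpace ℝ (Fin n))
    (hv_cont : Continuous (fun q : ℝ × EuclideanSpace ℝ (Fin n) => v q.1 q.2))
    (hv_diff : ∀ t, Differentiable ℝ (v t))
    (hX0 : ∀ x, X 0 x = x)
    (hflow : ∀ t x, HasDerivAt (fun s => X s x) (v t (X t x)) t)
    (p : ℝ → EuclideanSpace ℝ (Fin n) → ℝ)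
    (hp_smooth : ContDiff ℝ 1 (fun q : ℝ × EuclideanSpace ℝ (Fin n) => p q.1 q.2))
    (hcont_eq : ∀ (t : ℝ) (y : EuclideanSpace ℝ (Fin n)),
      deriv (fun s => p s y) t + ⟪gradient (p t) y, v t y⟫ + p t y * divg (v t) y = 0) :
    ∀ (x : EuclideanSpace ℝ (Fin n)) (t : ℝ),
      HasDerivAt (fun s => p s (X s x))
        (-(p t (X t x) * divg (v t) (X t x))) t :=
  density_along_flow_hasDerivAt_general n v X hflow p hp_smooth hcont_eq
end

section
/- Let n ≥ 1, let v : ℝ → ℝⁿ → ℝⁿ be continuous, differentiable in x with (t, y) ↦ (∇·v_t)(y) continuous, and let X : ℝ → ℝⁿ → ℝⁿ be a flow of v that is continuous in (t, x). Suppose p : ℝ → ℝⁿ → ℝ is continuously differentiable jointly in (t, y) and satisfies ∂p/∂t(t, y) + ∇p_t(y)·v_t(y) + p(t, y)·(∇·v_t)(y) = 0 for all (t, y). Then for all t ∈ ℝ and x ∈ ℝⁿ: p(t, X(t, x)) = p(0, x) · exp(−∫₀ᵗ (∇·v_s)(X(s, x)) ds). -/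
open MeasureTheory
open scoped RealInnerProductSpace

/-! Along a characteristic `s ↦ (s, X s x)` the continuity equation becomes the linear ODE
`f' = -(∇·v) f` for `f s = p s (X s x)`, whose solutions are `f 0 · exp (-∫ ∇·v)`:
`f s · exp (∫₀ˢ ∇·v)` has derivative zero. -/

theorem eq_mul_exp_neg_integral_of_hasDerivAt {f a : ℝ → ℝ} (ha : Continuous a)
    (hf : ∀ s, HasDerivAt f (-(f s * a s)) s) (t₀ t : ℝ) :
    f t = f t₀ * Real.exp (-∫ s in t₀..t, a s) := by
  set I : ℝ → ℝ := fun r => ∫ s in t₀..r, a s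
  have hI : ∀ s, HasDerivAt I (a s) s := fun s =>
    intervalIntegral.integral_hasDerivAt_right (ha.intervalIntegrable t₀ s)
      (ha.stronglyMeasurableAtFilter _ _) ha.continuousAt
  have hg : ∀ s, HasDerivAt (fun r => f r * Real.exp (I r)) 0 s := fun s => by
    have := (hf s).mul (hI s).exp
    rwa [show -(f s * a s) * Real.exp (I s) + f s * (Real.exp (I s) * a s) = 0 by ring] at this
  have hconst : f t * Real.exp (I t) = f t₀ * Real.exp (I t₀) :=
    is_const_of_deriv_eq_zero (fun r => (hg r).differentiableAt) (fun r => (hg r).deriv) t t₀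
  simp only [I, intervalIntegral.integral_same, Real.exp_zero, mul_one] at hconst
  rw [← hconst, Real.exp_neg, mul_inv_cancel_right₀ (Real.exp_ne_zero _)]

section ChainRule

variable {E : Type*} [NormedAddCommGroup E] [InnerProductSpace ℝ E]
  {p : ℝ → E → ℝ} {s : ℝ} {y : E}

theorem deriv_fst_eq_fderiv_uncurry
    (hp : DifferentiableAt ℝ (fun q : ℝ × E => p q.1 q.2) (s, y)) :
    deriv (fun r => p r y) s = fderiv ℝ (fun q : ℝ × E => p q.1 q.2) (s, y) (1, 0) :=
  (hp.hasFDerivAt.comp_hasDerivAt (f := fun r => (r, y)) s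
    ((hasDerivAt_id s).prodMk (hasDerivAt_const s y))).deriv

theorem inner_gradient_eq_fderiv_uncurry [CompleteSpace E]
    (hp : DifferentiableAt ℝ (fun q : ℝ × E => p q.1 q.2) (s, y)) (w : E) :
    ⟪gradient (p s) y, w⟫ = fderiv ℝ (fun q : ℝ × E => p q.1 q.2) (s, y) (0, w) := by
  have hps : HasFDerivAt (p s)
      ((fderiv ℝ (fun q : ℝ × E => p q.1 q.2) (s, y)).comp (ContinuousLinearMap.inr ℝ ℝ E)) y :=
    hp.hasFDerivAt.comp y ((hasFDerivAt_const s y).prodMk (hasFDerivAt_id y))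
  rw [gradient, InnerProductSpace.toDual_symm_apply, hps.fderiv]
  rfl

theorem hasDerivAt_apply_curve [CompleteSpace E] {γ : ℝ → E} {w : E}
    (hp : DifferentiableAt ℝ (fun q : ℝ × E => p q.1 q.2) (s, γ s)) (hγ : HasDerivAt γ w s) :
    HasDerivAt (fun r => p r (γ r))
      (deriv (fun r => p r (γ s)) s + ⟪gradient (p s) (γ s), w⟫) s := by
  rw [deriv_fst_eq_fderiv_uncurry hp, inner_gradient_eq_fderiv_uncurry hp, ← map_add,
    Prod.mk_add_mk, add_zero, zero_add]
  exact hp.hasFDerivAt.comp_hasDerivAt s ((hasDerivAt_id s).prodMk hγ)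

end ChainRule

theorem density_along_flow_eq_exp_neg_integral_div_general
    (n : ℕ)
    (v X : ℝ → EuclideanSpace ℝ (Fin n) → EuclideanSpace ℝ (Fin n))
    (hdiv_cont : Continuous (fun q : ℝ × EuclideanSpace ℝ (Fin n) => divg (v q.1) q.2))
    (hX0 : ∀ x, X 0 x = x)
    (hflow : ∀ t x, HasDerivAt (fun s => X s x) (v t (X t x)) t)
    (hX_cont : Continuous (fun q : ℝ × EuclideanSpace ℝ (Fin n) => X q.1 q.2))
    (p : ℝ → EuclideanSpace ℝ (Fin n) → ℝ)
    (hp_smooth : ContDiff ℝ 1 (fun q : ℝ × EuclideanSpace ℝ (Fin n) => p q.1 q.2))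
    (hcont_eq : ∀ (t : ℝ) (y : EuclideanSpace ℝ (Fin n)),
      deriv (fun s => p s y) t + ⟪gradient (p t) y, v t y⟫ + p t y * divg (v t) y = 0) :
    ∀ (t : ℝ) (x : EuclideanSpace ℝ (Fin n)),
      p t (X t x) = p 0 x * Real.exp (-∫ s in (0:ℝ)..t, divg (v s) (X s x)) := by
  intro t x
  have hdiv_along : Continuous fun s => divg (v s) (X s x) :=
    hdiv_cont.comp (continuous_id.prodMk (hX_cont.comp (continuous_id.prodMk continuous_const)))
  have hode : ∀ s, HasDerivAt (fun r => p r (X r x)) (-(p s (X s x) * divg (v s) (X s x))) s :=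
    fun s => by
      convert hasDerivAt_apply_curve (hp_smooth.differentiable one_ne_zero _) (hflow s x) using 1
      linarith [hcont_eq s (X s x)]
  rw [eq_mul_exp_neg_integral_of_hasDerivAt hdiv_along hode 0 t, hX0]

theorem density_along_flow_eq_exp_neg_integral_div
    (n : ℕ) (hn : 1 ≤ n)
    (v X : ℝ → EuclideanSpace ℝ (Fin n) → EuclideanSpace ℝ (Fin n))
    (hv_cont : Continuous (fun q : ℝ × EuclideanSpace ℝ (Fin n) => v q.1 q.2))
    (hv_diff : ∀ t, Differentiable ℝ (v t))
    (hdiv_cont : Continuous (fun q : ℝ × EuclideanSpace ℝ (Fin n) => divg (v q.1) q.2))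
    (hX0 : ∀ x, X 0 x = x)
    (hflow : ∀ t x, HasDerivAt (fun s => X s x) (v t (X t x)) t)
    (hX_cont : Continuous (fun q : ℝ × EuclideanSpace ℝ (Fin n) => X q.1 q.2))
    (p : ℝ → EuclideanSpace ℝ (Fin n) → ℝ)
    (hp_smooth : ContDiff ℝ 1 (fun q : ℝ × EuclideanSpace ℝ (Fin n) => p q.1 q.2))
    (hcont_eq : ∀ (t : ℝ) (y : EuclideanSpace ℝ (Fin n)),
      deriv (fun s => p s y) t + ⟪gradient (p t) y, v t y⟫ + p t y * divg (v t) y = 0) :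
    ∀ (t : ℝ) (x : EuclideanSpace ℝ (Fin n)),
      p t (X t x) = p 0 x * Real.exp (-∫ s in (0:ℝ)..t, divg (v s) (X s x)) :=
  density_along_flow_eq_exp_neg_integral_div_general n v X hdiv_cont hX0 hflow hX_cont p hp_smooth
    hcont_eq
end

section
/- (Theorem 3.1, forward direction.) Let n ≥ 1, let v : ℝ → ℝⁿ → ℝⁿ be bounded and twice continuously differentiable jointly in (t, x), and let X : ℝ → ℝⁿ → ℝⁿ be a flow of v, twice continuously differentiable jointly in (t, x), such that for every t the map X(t, ·) : ℝⁿ → ℝⁿ is a bijection. Suppose p : ℝ → ℝⁿ → ℝ is continuously differentiable jointly in (t, y), the function p(0, ·) is Lebesgue integrable on ℝⁿ, and p satisfies the continuity equation ∂p/∂t(t, y) + ∇p_t(y)·v_t(y) + p(t, y)·(∇·v_t)(y) = 0 for all (t, y). Then for every smooth compactly supported φ : ℝⁿ → ℝ and every t ∈ ℝ: ∫_{ℝⁿ} φ(y) p(t, y) dy = ∫_{ℝⁿ} φ(X(t, x)) p(0, x) dx. -/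
open MeasureTheory
open scoped RealInnerProductSpace
open ContinuousLinearMap
set_option maxHeartbeats 2000000

noncomputable section LiouvilleAux

abbrev Eu (n : ℕ) := EuclideanSpace ℝ (Fin n)

def detCM (n : ℕ) : ContinuousMultilinearMap ℝ (fun _ : Fin n => (Fin n → ℝ)) ℝ where
  toMultilinearMap := (Matrix.detRowAlternating (R := ℝ) (n := Fin n)).toMultilinearMap
  cont := Continuous.matrix_det (by exact continuous_id)

theorem hasDerivAt_det_row {n : ℕ} {N : ℝ → Fin n → Fin n → ℝ} {N' : Fin n → Fin n → ℝ} {t₀ : ℝ}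
    (h : HasDerivAt N N' t₀) :
    HasDerivAt (fun t => (Matrix.of (N t)).det)
      (∑ i, ((Matrix.of (N t₀)).updateRow i (N' i)).det) t₀ := by
  have H := ((detCM n).hasFDerivAt (N t₀)).comp_hasDerivAt t₀ h
  rw [ContinuousMultilinearMap.linearDeriv_apply] at H
  exact H

/-- the entries-of-matrix map as a linear map into the pi type -/
def entriesLM (n : ℕ) (b : Module.Basis (Fin n) ℝ (Eu n)) :
    (Eu n →L[ℝ] Eu n) →ₗ[ℝ] (Fin n → Fin n → ℝ) where
  toFun T := fun i j => b.repr (T (b j)) i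
  map_add' T S := by funext i j; simp
  map_smul' c T := by funext i j; simp

theorem entriesLM_eq {n : ℕ} (b : Module.Basis (Fin n) ℝ (Eu n)) (T : Eu n →L[ℝ] Eu n) :
    Matrix.of (entriesLM n b T) = LinearMap.toMatrix b b (T : Eu n →ₗ[ℝ] Eu n) := by
  ext i j
  simp [entriesLM, LinearMap.toMatrix_apply]

/-- Liouville-type derivative formula for the determinant of a path of continuous linear
maps satisfying `M' = A ∘ M`. -/
theorem hasDerivAt_clm_det {n : ℕ} {M : ℝ → (Eu n →L[ℝ] Eu n)} {A : Eu n →L[ℝ] Eu n} {t₀ : ℝ}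
    (h : HasDerivAt M (A.comp (M t₀)) t₀) :
    HasDerivAt (fun t => (M t).det)
      (LinearMap.trace ℝ (Eu n) (A : Eu n →ₗ[ℝ] Eu n) * (M t₀).det) t₀ := by
  classical
  set b : Module.Basis (Fin n) ℝ (Eu n) := (EuclideanSpace.basisFun (Fin n) ℝ).toBasis
  set Ψ : (Eu n →L[ℝ] Eu n) →ₗ[ℝ] (Fin n → Fin n → ℝ) := entriesLM n b with hΨ
  have hΨcont : Continuous Ψ := LinearMap.continuous_of_finiteDimensional Ψ
  set Ψc : (Eu n →L[ℝ] Eu n) →L[ℝ] (Fin n → Fin n → ℝ) := ⟨Ψ, hΨcont⟩ with hΨc'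
  have hN : HasDerivAt (fun t => Ψ (M t)) (Ψ (A.comp (M t₀))) t₀ :=
    Ψc.hasFDerivAt.comp_hasDerivAt t₀ h
  have H := hasDerivAt_det_row hN
  have hdet : ∀ T : Eu n →L[ℝ] Eu n, (Matrix.of (Ψ T)).det = T.det := by
    intro T
    rw [hΨ, entriesLM_eq, LinearMap.det_toMatrix]
  have hB : Matrix.of (Ψ (A.comp (M t₀)))
      = LinearMap.toMatrix b b (A : Eu n →ₗ[ℝ] Eu n) * Matrix.of (Ψ (M t₀)) := by
    rw [hΨ, entriesLM_eq, entriesLM_eq, ← LinearMap.toMatrix_comp b b b]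
    rfl
  set Nm := Matrix.of (Ψ (M t₀)) with hNm
  set B := LinearMap.toMatrix b b (A : Eu n →ₗ[ℝ] Eu n) with hBm
  have hrow : ∀ i, (Matrix.of (Ψ (A.comp (M t₀)))) i = ∑ k, B i k • Nm k := by
    intro i
    funext j
    rw [hB]
    simp [Matrix.mul_apply, Finset.sum_apply]
  have hsum : (∑ i, (Nm.updateRow i ((Matrix.of (Ψ (A.comp (M t₀)))) i)).det)
      = LinearMap.trace ℝ (Eu n) (A : Eu n →ₗ[ℝ] Eu n) * Nm.det := by
    rw [LinearMap.trace_eq_matrix_trace ℝ b, Matrix.trace, Finset.sum_mul]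
    refine Finset.sum_congr rfl fun i _ => ?_
    rw [hrow i, Matrix.det_updateRow_sum Nm i (fun k => B i k)]
    simp [Matrix.diag, hBm]
  have Hgoal : HasDerivAt (fun t => (Matrix.of (Ψ (M t))).det)
      (LinearMap.trace ℝ (Eu n) (A : Eu n →ₗ[ℝ] Eu n) * Nm.det) t₀ := by
    rw [← hsum]; exact H
  simp only [hNm, hdet] at Hgoal
  exact Hgoal

/-- The key pointwise identity: positivity of the Jacobian and the Lagrangian form of the
continuity equation. -/
theorem key_identity {n : ℕ}
    (v X : ℝ → Eu n → Eu n)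
    (hv_smooth : ContDiff ℝ 2 (fun q : ℝ × Eu n => v q.1 q.2))
    (hX_smooth : ContDiff ℝ 2 (fun q : ℝ × Eu n => X q.1 q.2))
    (hX0 : ∀ x, X 0 x = x)
    (hflow : ∀ t x, HasDerivAt (fun s => X s x) (v t (X t x)) t)
    (p : ℝ → Eu n → ℝ)
    (hp_smooth : ContDiff ℝ 1 (fun q : ℝ × Eu n => p q.1 q.2))
    (hcont_eq : ∀ (t : ℝ) (y : Eu n),
      deriv (fun s => p s y) t + ⟪gradient (p t) y, v t y⟫ + p t y * divg (v t) y = 0)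
    (x : Eu n) (t : ℝ) :
    0 < ((fderiv ℝ (fun q : ℝ × Eu n => X q.1 q.2) (t, x)).comp
          (ContinuousLinearMap.inr ℝ ℝ (Eu n))).det ∧
      p t (X t x) * ((fderiv ℝ (fun q : ℝ × Eu n => X q.1 q.2) (t, x)).comp
          (ContinuousLinearMap.inr ℝ ℝ (Eu n))).det = p 0 x := by
  classical
  set XX : ℝ × Eu n → Eu n := fun q => X q.1 q.2 with hXX
  set VV : ℝ × Eu n → Eu n := fun q => v q.1 q.2 with hVV
  set PP : ℝ × Eu n → ℝ := fun q => p q.1 q.2 with hPP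
  have hXd : Differentiable ℝ XX := hX_smooth.differentiable (by norm_num)
  have hVd : Differentiable ℝ VV := hv_smooth.differentiable (by norm_num)
  have hPd : Differentiable ℝ PP := hp_smooth.differentiable one_ne_zero
  set W : ℝ × Eu n → ((ℝ × Eu n) →L[ℝ] Eu n) := fderiv ℝ XX with hW
  have hWc1 : ContDiff ℝ 1 W := hX_smooth.fderiv_right (by norm_num)
  have hWd : Differentiable ℝ W := hWc1.differentiable one_ne_zero
  set M : ℝ → (Eu n →L[ℝ] Eu n) := fun s => (W (s, x)).comp (inr ℝ ℝ (Eu n)) with hM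
  have hinr : ∀ (s : ℝ) (y : Eu n),
      HasFDerivAt (fun z : Eu n => ((s, z) : ℝ × Eu n)) (inr ℝ ℝ (Eu n)) y := fun s y =>
    (hasFDerivAt_const s y).prodMk (hasFDerivAt_id y)
  -- (i) spatial derivative of X t
  have hMfd : ∀ (s : ℝ) (y : Eu n),
      HasFDerivAt (X s) ((W (s, y)).comp (inr ℝ ℝ (Eu n))) y := by
    intro s y
    exact ((hXd (s, y)).hasFDerivAt).comp y (hinr s y)
  -- (ii) time partial of X
  have hWv : ∀ (s : ℝ) (y : Eu n), (W (s, y)) (1, (0 : Eu n)) = v s (X s y) := by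
    intro s y
    have h1 : HasDerivAt (fun r : ℝ => XX (r, y)) ((W (s, y)) (1, (0 : Eu n))) s :=
      by have h := ((hXd (s, y)).hasFDerivAt).comp_hasDerivAt s ((hasDerivAt_id s).prodMk (hasDerivAt_const s y)); exact h
    exact h1.unique (hflow s y)
  -- (iii) spatial derivative of v t
  have hAfd : ∀ (s : ℝ) (y : Eu n),
      HasFDerivAt (v s) ((fderiv ℝ VV (s, y)).comp (inr ℝ ℝ (Eu n))) y := by
    intro s y
    exact ((hVd (s, y)).hasFDerivAt).comp y (hinr s y)
  set A : ℝ → (Eu n →L[ℝ] Eu n) := fun s => (fderiv ℝ VV (s, X s x)).comp (inr ℝ ℝ (Eu n))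
    with hA
  have htrace : ∀ (s : ℝ) (y : Eu n),
      divg (v s) y
        = LinearMap.trace ℝ (Eu n)
            (((fderiv ℝ VV (s, y)).comp (inr ℝ ℝ (Eu n))) : Eu n →ₗ[ℝ] Eu n) := by
    intro s y
    rw [divg, (hAfd s y).fderiv]
  -- (iv) ODE for M
  have hM' : ∀ s : ℝ, HasDerivAt M ((A s).comp (M s)) s := by
    intro s
    set DW : (ℝ × Eu n) →L[ℝ] ((ℝ × Eu n) →L[ℝ] Eu n) := fderiv ℝ W (s, x) with hDW
    have hWs : HasFDerivAt W DW (s, x) := (hWd (s, x)).hasFDerivAt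
    have h4 : HasDerivAt (fun r : ℝ => W (r, x)) (DW (1, (0 : Eu n))) s :=
      hWs.comp_hasDerivAt s ((hasDerivAt_id s).prodMk (hasDerivAt_const s x))
    set Φ : ((ℝ × Eu n) →L[ℝ] Eu n) →L[ℝ] (Eu n →L[ℝ] Eu n) :=
      (compL ℝ (Eu n) (ℝ × Eu n) (Eu n)).flip (inr ℝ ℝ (Eu n)) with hΦ
    have h5 : HasDerivAt M (Φ (DW (1, (0 : Eu n)))) s :=
      Φ.hasFDerivAt.comp_hasDerivAt s h4
    have hsym : ∀ u w, DW u w = DW w u :=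
      second_derivative_symmetric (fun y => (hXd y).hasFDerivAt) hWs
    -- two computations of the derivative of q ↦ W q (1,0)
    have hg1 : HasFDerivAt (fun q : ℝ × Eu n => W q (1, (0 : Eu n)))
        ((ContinuousLinearMap.apply ℝ (Eu n) ((1 : ℝ), (0 : Eu n))).comp DW) (s, x) :=
      ((ContinuousLinearMap.apply ℝ (Eu n) ((1 : ℝ), (0 : Eu n))).hasFDerivAt).comp (s, x) hWs
    have hg2 : HasFDerivAt (fun q : ℝ × Eu n => VV (q.1, XX q))
        ((fderiv ℝ VV (s, XX (s, x))).comp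
          ((fst ℝ ℝ (Eu n)).prod (W (s, x)))) (s, x) :=
      ((hVd _).hasFDerivAt).comp (s, x) ((hasFDerivAt_fst).prodMk (hXd (s, x)).hasFDerivAt)
    have hgeq : (fun q : ℝ × Eu n => W q (1, (0 : Eu n)))
        = fun q : ℝ × Eu n => VV (q.1, XX q) := by
      funext q
      have := hWv q.1 q.2
      simpa using this
    rw [hgeq] at hg1
    have huniq := hg1.unique hg2
    have hfinal : Φ (DW (1, (0 : Eu n))) = (A s).comp (M s) := by
      ext e
      have e1 : (Φ (DW (1, (0 : Eu n)))) e = DW ((0 : ℝ), e) ((1 : ℝ), (0 : Eu n)) := by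
        simp [hΦ, hsym ((1 : ℝ), (0 : Eu n)) ((0 : ℝ), e)]
      have e2 := DFunLike.congr_fun huniq ((0 : ℝ), e)
      simp only [ContinuousLinearMap.comp_apply, ContinuousLinearMap.apply_apply,
        ContinuousLinearMap.prod_apply, ContinuousLinearMap.coe_fst', Prod.fst] at e2
      rw [e1, e2]
      simp [hA, hM]
      rfl
    rwa [hfinal] at h5
  -- (v) trace path is continuous
  set τ : ℝ → ℝ := fun s => LinearMap.trace ℝ (Eu n) ((A s) : Eu n →ₗ[ℝ] Eu n) with hτ
  have hXcont : Continuous fun s : ℝ => X s x :=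
    hX_smooth.continuous.comp (continuous_id.prodMk continuous_const)
  have hτcont : Continuous τ := by
    have h1' : ContDiff ℝ 1 (fderiv ℝ VV) := hv_smooth.fderiv_right (by norm_num)
    have h1 : Continuous (fderiv ℝ VV) := h1'.continuous
    have h2 : Continuous fun s : ℝ => fderiv ℝ VV (s, X s x) :=
      h1.comp (continuous_id.prodMk hXcont)
    set trL : (Eu n →L[ℝ] Eu n) →ₗ[ℝ] ℝ :=
      (LinearMap.trace ℝ (Eu n)).comp (coeLM ℝ) with htrL
    have h3 : Continuous trL := LinearMap.continuous_of_finiteDimensional trL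
    set Φ : ((ℝ × Eu n) →L[ℝ] Eu n) →L[ℝ] (Eu n →L[ℝ] Eu n) :=
      (compL ℝ (Eu n) (ℝ × Eu n) (Eu n)).flip (inr ℝ ℝ (Eu n)) with hΦ
    exact h3.comp (Φ.continuous.comp h2)
  -- (vi) the determinant, its ODE and positivity
  set d : ℝ → ℝ := fun s => (M s).det with hd
  have hd' : ∀ s, HasDerivAt d (τ s * d s) s := fun s => hasDerivAt_clm_det (hM' s)
  set c : ℝ → ℝ := fun s => ∫ u in (0 : ℝ)..s, τ u with hc
  have hc' : ∀ s, HasDerivAt c (τ s) s := fun s =>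
    intervalIntegral.integral_hasDerivAt_right (hτcont.intervalIntegrable _ _)
      (hτcont.stronglyMeasurable.stronglyMeasurableAtFilter) hτcont.continuousAt
  have hM0 : M 0 = ContinuousLinearMap.id ℝ (Eu n) := by
    have h1 : HasFDerivAt (X 0) (M 0) x := hMfd 0 x
    have h2 : HasFDerivAt (X 0) (ContinuousLinearMap.id ℝ (Eu n)) x := by
      have hid : X 0 = _root_.id := funext hX0
      rw [hid]
      exact hasFDerivAt_id x
    exact h1.unique h2
  have hd0 : d 0 = 1 := by
    show (M 0).det = 1
    rw [hM0]
    show LinearMap.det ((ContinuousLinearMap.id ℝ (Eu n)) : Eu n →ₗ[ℝ] Eu n) = 1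
    rw [ContinuousLinearMap.coe_id, LinearMap.det_id]
  have hu : ∀ s, HasDerivAt (fun r => d r * Real.exp (-c r)) 0 s := by
    intro s
    have h1 : HasDerivAt (fun r => Real.exp (-c r)) (Real.exp (-c s) * (-τ s)) s := by
      have := ((hc' s).neg).exp
      simpa [mul_comm] using this
    have : HasDerivAt (fun r => d r * Real.exp (-c r))
        (τ s * d s * Real.exp (-c s) + d s * (Real.exp (-c s) * -τ s)) s := (hd' s).fun_mul h1
    convert this using 1
    ring
  have hconst : ∀ s, d s * Real.exp (-c s) = 1 := by
    intro s
    have hcst := is_const_of_deriv_eq_zero (f := fun r => d r * Real.exp (-c r))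
      (fun r => (hu r).differentiableAt) (fun r => (hu r).deriv) s 0
    rw [hcst, hd0]
    simp [hc]
  have hdexp : ∀ s, d s = Real.exp (c s) := by
    intro s
    have h := hconst s
    rw [Real.exp_neg, ← div_eq_mul_inv] at h
    exact (div_eq_one_iff_eq (Real.exp_ne_zero _)).1 h
  have hdpos : ∀ s, 0 < d s := fun s => (hdexp s) ▸ Real.exp_pos _
  -- (vii) the transported density is constant
  have hPder : ∀ s : ℝ, HasDerivAt (fun r => p r (X r x)) (-(p s (X s x) * τ s)) s := by
    intro s
    set y := X s x with hy
    set DP : (ℝ × Eu n) →L[ℝ] ℝ := fderiv ℝ PP (s, y) with hDP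
    have hpath : HasDerivAt (fun r : ℝ => ((r, X r x) : ℝ × Eu n)) ((1 : ℝ), v s y) s :=
      (hasDerivAt_id s).prodMk (hflow s x)
    have h1 : HasDerivAt (fun r : ℝ => PP (r, X r x)) (DP (1, v s y)) s :=
      by have h := (hPd (s, y)).hasFDerivAt.comp_hasDerivAt s hpath; exact h
    have h2 : HasDerivAt (fun r : ℝ => PP (r, y)) (DP (1, (0 : Eu n))) s :=
      by have h := (hPd (s, y)).hasFDerivAt.comp_hasDerivAt s ((hasDerivAt_id s).prodMk (hasDerivAt_const s y)); exact h
    have h2' : deriv (fun r => p r y) s = DP (1, (0 : Eu n)) := h2.deriv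
    have h3 : HasFDerivAt (p s) (DP.comp (inr ℝ ℝ (Eu n))) y :=
      (hPd (s, y)).hasFDerivAt.comp y (hinr s y)
    have h4 : ⟪gradient (p s) y, v s y⟫ = DP ((0 : ℝ), v s y) := by
      have hgrad := h3.hasGradientAt
      rw [hgrad.gradient, InnerProductSpace.toDual_symm_apply]
      simp
    have h5 : DP ((1 : ℝ), v s y) = DP (1, (0 : Eu n)) + DP ((0 : ℝ), v s y) := by
      rw [← map_add]
      norm_num
    have h6 := hcont_eq s y
    rw [h2', h4, htrace s y] at h6
    have h7 : DP ((1 : ℝ), v s y) = -(p s y * τ s) := by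
      rw [h5]
      have : τ s = LinearMap.trace ℝ (Eu n)
          (((fderiv ℝ VV (s, y)).comp (inr ℝ ℝ (Eu n))) : Eu n →ₗ[ℝ] Eu n) := by
        rw [hτ, hA, hy]
      rw [this] at *
      linarith [h6]
    rw [← h7]
    exact h1
  have hG : ∀ s, HasDerivAt (fun r => p r (X r x) * d r) 0 s := by
    intro s
    have : HasDerivAt (fun r => p r (X r x) * d r)
        (-(p s (X s x) * τ s) * d s + p s (X s x) * (τ s * d s)) s := (hPder s).fun_mul (hd' s)
    convert this using 1
    ring
  have hGconst : p t (X t x) * d t = p 0 (X 0 x) * d 0 :=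
    is_const_of_deriv_eq_zero (f := fun r => p r (X r x) * d r)
      (fun r => (hG r).differentiableAt) (fun r => (hG r).deriv) t 0
  rw [hd0, hX0, mul_one] at hGconst
  exact ⟨hdpos t, hGconst⟩

end LiouvilleAux

theorem pushforward_density_of_continuity_equation
    (n : ℕ) (hn : 1 ≤ n)
    (v X : ℝ → EuclideanSpace ℝ (Fin n) → EuclideanSpace ℝ (Fin n))
    (hv_bdd : ∃ C : ℝ, ∀ t x, ‖v t x‖ ≤ C)
    (hv_smooth : ContDiff ℝ 2 (fun q : ℝ × EuclideanSpace ℝ (Fin n) => v q.1 q.2))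
    (hX_smooth : ContDiff ℝ 2 (fun q : ℝ × EuclideanSpace ℝ (Fin n) => X q.1 q.2))
    (hX0 : ∀ x, X 0 x = x)
    (hflow : ∀ t x, HasDerivAt (fun s => X s x) (v t (X t x)) t)
    (hX_bij : ∀ t, Function.Bijective (X t))
    (p : ℝ → EuclideanSpace ℝ (Fin n) → ℝ)
    (hp_smooth : ContDiff ℝ 1 (fun q : ℝ × EuclideanSpace ℝ (Fin n) => p q.1 q.2))
    (hp0_int : Integrable (p 0))
    (hcont_eq : ∀ (t : ℝ) (y : EuclideanSpace ℝ (Fin n)),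
      deriv (fun s => p s y) t + ⟪gradient (p t) y, v t y⟫ + p t y * divg (v t) y = 0) :
    ∀ (φ : EuclideanSpace ℝ (Fin n) → ℝ), ContDiff ℝ (⊤ : ℕ∞) φ → HasCompactSupport φ →
      ∀ t : ℝ, ∫ y, φ y * p t y = ∫ x, φ (X t x) * p 0 x := by
  intro φ hφ hφc t
  have hXd : Differentiable ℝ (fun q : ℝ × Eu n => X q.1 q.2) :=
    hX_smooth.differentiable (by norm_num)
  set F' : Eu n → (Eu n →L[ℝ] Eu n) :=
    fun x => (fderiv ℝ (fun q : ℝ × Eu n => X q.1 q.2) (t, x)).comp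
      (ContinuousLinearMap.inr ℝ ℝ (Eu n)) with hF'
  have hfd : ∀ x : Eu n, HasFDerivAt (X t) (F' x) x := by
    intro x
    exact ((hXd (t, x)).hasFDerivAt).comp x
      ((hasFDerivAt_const t x).prodMk (hasFDerivAt_id x))
  have hkey := fun x : Eu n =>
    key_identity v X hv_smooth hX_smooth hX0 hflow p hp_smooth hcont_eq x t
  have himg : X t '' Set.univ = Set.univ := by
    rw [Set.image_univ]
    exact (hX_bij t).2.range_eq
  have hCoV := integral_image_eq_integral_abs_det_fderiv_smul (volume) MeasurableSet.univ
      (fun x _ => (hfd x).hasFDerivWithinAt) ((hX_bij t).1.injOn) (fun y => φ y * p t y)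
  rw [himg] at hCoV
  have hint : (fun x : Eu n => |(F' x).det| • (φ (X t x) * p t (X t x)))
      = fun x : Eu n => φ (X t x) * p 0 x := by
    funext x
    obtain ⟨hpos, heq⟩ := hkey x
    rw [smul_eq_mul, abs_of_pos hpos, ← heq]
    ring
  rw [← setIntegral_univ (μ := volume) (f := fun y : Eu n => φ y * p t y), hCoV]
  rw [show (fun x : Eu n => |(F' x).det| • (φ (X t x) * p t (X t x)))
      = fun x : Eu n => φ (X t x) * p 0 x from hint]  -- integrand rewrite
  exact setIntegral_univ
end

section
/- Let n ≥ 1, let v : ℝ → ℝⁿ → ℝⁿ be continuous and bounded, and let X : ℝ → ℝⁿ → ℝⁿ be a flow of v that is continuous in (t, x). Let p₀ : ℝⁿ → ℝ be Lebesgue integrable and let φ : ℝⁿ → ℝ be smooth with compact support. Then the map t ↦ ∫_{ℝⁿ} φ(X(t, x)) p₀(x) dx is differentiable on ℝ, with derivative d/dt ∫_{ℝⁿ} φ(X(t, x)) p₀(x) dx = ∫_{ℝⁿ} ∇φ(X(t, x)) · v(t, X(t, x)) p₀(x) dx. -/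
open MeasureTheory
open scoped RealInnerProductSpace

theorem hasDerivAt_integral_test_function_along_flow
    (n : ℕ) (hn : 1 ≤ n)
    (v X : ℝ → EuclideanSpace ℝ (Fin n) → EuclideanSpace ℝ (Fin n))
    (hv_cont : Continuous (fun q : ℝ × EuclideanSpace ℝ (Fin n) => v q.1 q.2))
    (hv_bdd : ∃ C : ℝ, ∀ t x, ‖v t x‖ ≤ C)
    (hX0 : ∀ x, X 0 x = x)
    (hflow : ∀ t x, HasDerivAt (fun s => X s x) (v t (X t x)) t)
    (hX_cont : Continuous (fun q : ℝ × EuclideanSpace ℝ (Fin n) => X q.1 q.2))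
    (p₀ : EuclideanSpace ℝ (Fin n) → ℝ) (hp₀ : Integrable p₀)
    (φ : EuclideanSpace ℝ (Fin n) → ℝ) (hφ : ContDiff ℝ (⊤ : ℕ∞) φ)
    (hφc : HasCompactSupport φ) :
    ∀ t : ℝ,
      HasDerivAt (fun s => ∫ x, φ (X s x) * p₀ x)
        (∫ x, ⟪gradient φ (X t x), v t (X t x)⟫ * p₀ x) t := by
  intro t
  obtain ⟨C, hC⟩ := hv_bdd
  have hC0 : 0 ≤ C := le_trans (norm_nonneg _) (hC 0 0)
  -- gradient vs fderiv
  have hgrad : ∀ y w, ⟪gradient φ y, w⟫ = fderiv ℝ φ y w := by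
    intro y w
    simp [gradient, InnerProductSpace.toDual_symm_apply]
  -- bound on fderiv
  have hfd_cont : Continuous (fderiv ℝ φ) := hφ.continuous_fderiv (by simp)
  obtain ⟨M, hM⟩ := (hφc.fderiv ℝ).exists_bound_of_continuous hfd_cont
  -- bound on φ
  obtain ⟨K, hK⟩ := hφc.exists_bound_of_continuous hφ.continuous
  have hdiff : ∀ (s : ℝ) x, HasDerivAt (fun s => φ (X s x) * p₀ x)
      (⟪gradient φ (X s x), v s (X s x)⟫ * p₀ x) s := by
    intro s x
    have h1 : HasDerivAt (fun s => φ (X s x)) (fderiv ℝ φ (X s x) (v s (X s x))) s :=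
      (hφ.differentiable (by simp) (X s x)).hasFDerivAt.comp_hasDerivAt s (hflow s x)
    rw [hgrad]
    exact h1.mul_const (p₀ x)
  -- measurability of F s
  have hFmeas : ∀ s : ℝ, AEStronglyMeasurable (fun x => φ (X s x) * p₀ x) volume := by
    intro s
    exact ((hφ.continuous.comp (hX_cont.comp (Continuous.prodMk_right s))).aestronglyMeasurable).mul
      hp₀.aestronglyMeasurable
  have hF'cont : ∀ s : ℝ, Continuous (fun x => ⟪gradient φ (X s x), v s (X s x)⟫) := by
    intro s
    have hXs : Continuous (fun x => X s x) := hX_cont.comp (Continuous.prodMk_right s)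
    have hvs : Continuous (fun x => v s (X s x)) := (hv_cont.comp (Continuous.prodMk_right s)).comp hXs
    have hg : Continuous (gradient φ) := by
      have : Continuous fun y => (InnerProductSpace.toDual ℝ _).symm (fderiv ℝ φ y) :=
        (InnerProductSpace.toDual ℝ _).symm.continuous.comp hfd_cont
      exact this
    exact Continuous.inner (hg.comp hXs) hvs
  have key := hasDerivAt_integral_of_dominated_loc_of_deriv_le (μ := volume)
    (F := fun s x => φ (X s x) * p₀ x)
    (F' := fun s x => ⟪gradient φ (X s x), v s (X s x)⟫ * p₀ x)
    (bound := fun x => M * C * |p₀ x|) (x₀ := t) (s := Metric.ball t 1) (Metric.ball_mem_nhds t one_pos)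
    (Filter.Eventually.of_forall hFmeas)
    (hp₀.bdd_mul ((hφ.continuous.comp (hX_cont.comp (Continuous.prodMk_right t))).aestronglyMeasurable)
      (Filter.Eventually.of_forall fun x => hK _))
    (((hF'cont t).aestronglyMeasurable).mul hp₀.aestronglyMeasurable)
    (Filter.Eventually.of_forall fun x s _ => by
      have h1 : ‖⟪gradient φ (X s x), v s (X s x)⟫‖ ≤ M * C := by
        calc ‖⟪gradient φ (X s x), v s (X s x)⟫‖
            ≤ ‖gradient φ (X s x)‖ * ‖v s (X s x)‖ := norm_inner_le_norm _ _
          _ ≤ M * C := by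
              apply mul_le_mul _ (hC _ _) (norm_nonneg _)
                (le_trans (norm_nonneg _) (hM (X s x)))
              have : ‖gradient φ (X s x)‖ = ‖fderiv ℝ φ (X s x)‖ := by
                simp [gradient]
              rw [this]; exact hM _
      calc ‖⟪gradient φ (X s x), v s (X s x)⟫ * p₀ x‖
          = ‖⟪gradient φ (X s x), v s (X s x)⟫‖ * ‖p₀ x‖ := norm_mul _ _
        _ ≤ (M * C) * ‖p₀ x‖ := mul_le_mul_of_nonneg_right h1 (norm_nonneg _)
        _ = M * C * |p₀ x| := by rw [Real.norm_eq_abs])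
    ((hp₀.abs).const_mul (M * C))
    (Filter.Eventually.of_forall fun x s _ => hdiff s x)
  exact key.2
end

section
/- (Theorem 3.1, converse direction, weak form.) Let n ≥ 1, let v : ℝ → ℝⁿ → ℝⁿ be continuous and bounded, and let X : ℝ → ℝⁿ → ℝⁿ be a flow of v that is continuous in (t, x). Let p₀ : ℝⁿ → ℝ be Lebesgue integrable, and let p : ℝ → ℝⁿ → ℝ be such that p(t, ·) is locally integrable for each t and, for every continuous compactly supported g : ℝⁿ → ℝ and every t ∈ ℝ, ∫_{ℝⁿ} g(y) p(t, y) dy = ∫_{ℝⁿ} g(X(t, x)) p₀(x) dx. Then for every smooth compactly supported φ : ℝⁿ → ℝ the map t ↦ ∫_{ℝⁿ} φ(y) p(t, y) dy is differentiable, with d/dt ∫_{ℝⁿ} φ(y) p(t, y) dy = ∫_{ℝⁿ} ∇φ(y) · v(t, y) p(t, y) dy. -/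
open MeasureTheory
open scoped RealInnerProductSpace

theorem hasDerivAt_integral_test_function_weak_continuity_equation
    (n : ℕ) (hn : 1 ≤ n)
    (v X : ℝ → EuclideanSpace ℝ (Fin n) → EuclideanSpace ℝ (Fin n))
    (hv_cont : Continuous (fun q : ℝ × EuclideanSpace ℝ (Fin n) => v q.1 q.2))
    (hv_bdd : ∃ C : ℝ, ∀ t x, ‖v t x‖ ≤ C)
    (hX0 : ∀ x, X 0 x = x)
    (hflow : ∀ t x, HasDerivAt (fun s => X s x) (v t (X t x)) t)
    (hX_cont : Continuous (fun q : ℝ × EuclideanSpace ℝ (Fin n) => X q.1 q.2))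
    (p₀ : EuclideanSpace ℝ (Fin n) → ℝ) (hp₀ : Integrable p₀)
    (p : ℝ → EuclideanSpace ℝ (Fin n) → ℝ)
    (hp_loc : ∀ t, LocallyIntegrable (p t))
    (hweak : ∀ (g : EuclideanSpace ℝ (Fin n) → ℝ), Continuous g → HasCompactSupport g →
      ∀ t : ℝ, ∫ y, g y * p t y = ∫ x, g (X t x) * p₀ x) :
    ∀ (φ : EuclideanSpace ℝ (Fin n) → ℝ), ContDiff ℝ (⊤ : ℕ∞) φ → HasCompactSupport φ →
      ∀ t : ℝ,
        HasDerivAt (fun s => ∫ y, φ y * p s y)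
          (∫ y, ⟪gradient φ y, v t y⟫ * p t y) t := by
  intro φ hφ hφc t
  obtain ⟨C, hC⟩ := hv_bdd
  have hC0 : 0 ≤ C := le_trans (norm_nonneg _) (hC 0 0)
  have hgrad : ∀ y w, ⟪gradient φ y, w⟫ = fderiv ℝ φ y w := fun y w => by
    rw [gradient]; exact InnerProductSpace.toDual_symm_apply
  have hφ_diff : Differentiable ℝ φ := hφ.differentiable (by simp)
  have hfderiv_cont : Continuous (fderiv ℝ φ) := hφ.continuous_fderiv (by simp)
  have hfderiv_supp : HasCompactSupport (fderiv ℝ φ) := hφc.fderiv ℝ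
  obtain ⟨M, hM⟩ : ∃ M, ∀ y, ‖fderiv ℝ φ y‖ ≤ M := by
    obtain ⟨M, hM⟩ := hfderiv_cont.norm.bddAbove_range_of_hasCompactSupport hfderiv_supp.norm
    exact ⟨M, fun y => hM ⟨y, rfl⟩⟩
  obtain ⟨K, hK⟩ : ∃ K, ∀ y, ‖φ y‖ ≤ K := by
    obtain ⟨K, hK⟩ := hφ.continuous.norm.bddAbove_range_of_hasCompactSupport hφc.norm
    exact ⟨K, fun y => hK ⟨y, rfl⟩⟩
  -- rewrite the function using the weak identity
  have hfun : (fun s => ∫ y, φ y * p s y) = fun s => ∫ x, φ (X s x) * p₀ x := by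
    funext s; exact hweak φ hφ.continuous hφc s
  -- continuity/support of the test function for the derivative
  have hvt_cont : Continuous (fun y => v t y) := hv_cont.comp (Continuous.prodMk_right t)
  have hgrad_cont : Continuous (gradient φ) := by
    unfold gradient
    exact (InnerProductSpace.toDual ℝ _).symm.continuous.comp hfderiv_cont
  have hg_cont : Continuous (fun y => ⟪gradient φ y, v t y⟫) :=
    hgrad_cont.inner hvt_cont
  have hg_supp : HasCompactSupport (fun y => ⟪gradient φ y, v t y⟫) := by
    apply (hφc.fderiv ℝ).mono
    intro y hy
    simp only [Function.mem_support] at hy ⊢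
    intro h0
    apply hy
    rw [hgrad, h0]
    simp
  -- rewrite the derivative value using the weak identity
  have hval : (∫ y, ⟪gradient φ y, v t y⟫ * p t y)
      = ∫ x, fderiv ℝ φ (X t x) (v t (X t x)) * p₀ x := by
    rw [hweak _ hg_cont hg_supp t]
    congr 1; funext x; rw [hgrad]
  rw [hfun, hval]
  -- now differentiate under the integral sign
  have main := hasDerivAt_integral_of_dominated_loc_of_deriv_le (μ := volume)
    (F := fun s x => φ (X s x) * p₀ x)
    (F' := fun s x => fderiv ℝ φ (X s x) (v s (X s x)) * p₀ x)
    (bound := fun x => M * C * ‖p₀ x‖) (x₀ := t) (s := Metric.ball t 1) (Metric.ball_mem_nhds t one_pos)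
    ?_ ?_ ?_ ?_ ?_ ?_
  · exact main.2
  · filter_upwards with s
    exact ((hφ.continuous.comp (hX_cont.comp (Continuous.prodMk_right s))).aestronglyMeasurable).mul
      hp₀.aestronglyMeasurable
  · refine hp₀.bdd_mul ?_ (ae_of_all _ fun x => hK _)
    exact (hφ.continuous.comp (hX_cont.comp (Continuous.prodMk_right t))).aestronglyMeasurable
  · have hc : Continuous (fun x => fderiv ℝ φ (X t x) (v t (X t x))) := by
      have h1 : Continuous (fun x => X t x) := hX_cont.comp (Continuous.prodMk_right t)
      have h2 : Continuous (fun x => v t (X t x)) := hvt_cont.comp h1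
      exact (hfderiv_cont.comp h1).clm_apply h2
    exact hc.aestronglyMeasurable.mul hp₀.aestronglyMeasurable
  · filter_upwards with x s _
    rw [norm_mul]
    gcongr
    calc ‖fderiv ℝ φ (X s x) (v s (X s x))‖
        ≤ ‖fderiv ℝ φ (X s x)‖ * ‖v s (X s x)‖ := (fderiv ℝ φ (X s x)).le_opNorm _
      _ ≤ M * C := by
          gcongr
          · exact le_trans (norm_nonneg _) (hM (X s x))
          · exact hM _
          · exact hC _ _
  · exact hp₀.norm.const_mul _
  · filter_upwards with x s _
    exact ((hφ_diff (X s x)).hasFDerivAt.comp_hasDerivAt s (hflow s x)).mul_const (p₀ x)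
end

section
/- (Theorem 3.1, converse direction, pointwise form.) Let n ≥ 1, let v : ℝ → ℝⁿ → ℝⁿ be bounded and continuously differentiable jointly in (t, x), and let X : ℝ → ℝⁿ → ℝⁿ be a flow of v that is continuous in (t, x). Let p₀ : ℝⁿ → ℝ be Lebesgue integrable, and let p : ℝ → ℝⁿ → ℝ be continuously differentiable jointly in (t, y) and such that, for every continuous compactly supported g : ℝⁿ → ℝ and every t ∈ ℝ, ∫_{ℝⁿ} g(y) p(t, y) dy = ∫_{ℝⁿ} g(X(t, x)) p₀(x) dx. Then p satisfies the continuity equation ∂p/∂t(t, y) + ∇p_t(y)·v_t(y) + p(t, y)·(∇·v_t)(y) = 0 for all t ∈ ℝ and y ∈ ℝⁿ. -/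
open MeasureTheory
open scoped RealInnerProductSpace

/-!
Test the equation against `g ∈ C¹_c`. Differentiating the pushforward identity in `t` gives
`∫ g ∂ₜp_t = ∫ ∇g(X_t x)·v_t(X_t x) p₀(x) dx`; the pushforward identity applied to the test
function `∇g·v_t` turns the right side back into `∫ (∇g·v_t) p_t`, and the divergence theorem for
the compactly supported field `g p_t v_t` makes this `-∫ g (∇p_t·v_t + p_t ∇·v_t)`. So the
continuous left side of the continuity equation integrates to zero against every `C¹_c` function,
hence vanishes identically.
-/

open Function Filter

theorem HasCompactSupport.clm_apply {α E F : Type*} [TopologicalSpace α]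
    [NormedAddCommGroup E] [NormedSpace ℝ E] [NormedAddCommGroup F] [NormedSpace ℝ F]
    {L : α → E →L[ℝ] F} (hL : HasCompactSupport L) (w : α → E) :
    HasCompactSupport fun z => L z (w z) :=
  hL.mono fun z hz hLz => hz (by simp [hLz])

section FiniteDimensional

variable {E : Type*} [NormedAddCommGroup E] [NormedSpace ℝ E] [FiniteDimensional ℝ E]
  [MeasurableSpace E] [BorelSpace E] {μ : Measure E} [μ.IsAddHaarMeasure]

theorem integral_fderiv_apply_eq_zero {f : E → ℝ} (hf : ContDiff ℝ 1 f)
    (h2f : HasCompactSupport f) (v : E) : ∫ y, fderiv ℝ f y v ∂μ = 0 := by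
  have h := integral_mul_fderiv_eq_neg_fderiv_mul_of_integrable (μ := μ) (v := v)
    (f := fun _ => (1 : ℝ)) (g := f) (by simp)
    (by simpa using ((hf.continuous_fderiv one_ne_zero).clm_apply continuous_const)
      |>.integrable_of_hasCompactSupport (h2f.fderiv_apply ℝ v))
    (by simpa using hf.continuous.integrable_of_hasCompactSupport h2f)
    (fun x _ => differentiableAt_const 1) (fun x _ => hf.differentiable one_ne_zero x)
  simpa using h

theorem Continuous.eq_zero_of_integral_contDiff_mul_eq_zero {F : E → ℝ} (hF : Continuous F)
    (h : ∀ g : E → ℝ, ContDiff ℝ 1 g → HasCompactSupport g → ∫ x, g x * F x ∂μ = 0) :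
    F = 0 := by
  rw [← hF.ae_eq_iff_eq μ continuous_zero]
  exact ae_eq_zero_of_integral_contDiff_smul_eq_zero hF.locallyIntegrable
    fun g hg h2g => h g (hg.of_le (by norm_cast)) h2g

end FiniteDimensional

section TimeDerivative

variable {E F : Type*} [NormedAddCommGroup E] [NormedSpace ℝ E]
  [NormedAddCommGroup F] [NormedSpace ℝ F]

theorem DifferentiableAt.hasDerivAt_uncurry_left {f : ℝ → E → F} {s : ℝ} {z : E}
    (hf : DifferentiableAt ℝ (uncurry f) (s, z)) :
    HasDerivAt (fun s => f s z) (fderiv ℝ (uncurry f) (s, z) (1, 0)) s :=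
  hf.hasFDerivAt.comp_hasDerivAt (f := fun s => (s, z)) s
    ((hasDerivAt_id s).prodMk (hasDerivAt_const s z))

theorem ContDiff.continuous_deriv_uncurry_left {f : ℝ → E → F}
    (hf : ContDiff ℝ 1 (uncurry f)) :
    Continuous fun q : ℝ × E => deriv (fun s => f s q.2) q.1 := by
  have h_eq : (fun q : ℝ × E => deriv (fun s => f s q.2) q.1) =
      fun q => fderiv ℝ (uncurry f) q (1, 0) :=
    funext fun q => (hf.differentiable one_ne_zero q).hasDerivAt_uncurry_left.deriv
  rw [h_eq]
  exact (hf.continuous_fderiv one_ne_zero).clm_apply continuous_const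

variable [MeasurableSpace E] [BorelSpace E] {μ : Measure E} [IsFiniteMeasureOnCompacts μ]

theorem hasDerivAt_integral_mul_of_contDiff_uncurry {p : ℝ → E → ℝ} {g : E → ℝ}
    (hp : ContDiff ℝ 1 (uncurry p)) (hg : Continuous g) (h2g : HasCompactSupport g) (t : ℝ) :
    HasDerivAt (fun s => ∫ z, g z * p s z ∂μ) (∫ z, g z * deriv (fun s => p s z) t ∂μ) t := by
  have hdp := hp.continuous_deriv_uncurry_left
  have hp_deriv : ∀ s z, HasDerivAt (fun s => p s z) (deriv (fun s => p s z) s) s := fun s z =>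
    (hp.differentiable one_ne_zero (s, z)).hasDerivAt_uncurry_left.differentiableAt.hasDerivAt
  obtain ⟨M, hM⟩ := ((isCompact_Icc (a := t - 1) (b := t + 1)).prod h2g)
    |>.exists_bound_of_continuousOn ((hg.comp continuous_snd).mul hdp).continuousOn
  have h_bound : ∀ z, ∀ s ∈ Metric.ball t 1,
      ‖g z * deriv (fun s => p s z) s‖ ≤ (tsupport g).indicator (fun _ => M) z := by
    intro z s hs
    by_cases hz : z ∈ tsupport g
    · rw [Real.ball_eq_Ioo] at hs
      rw [Set.indicator_of_mem hz]
      exact hM (s, z) ⟨⟨hs.1.le, hs.2.le⟩, hz⟩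
    · simp [Set.indicator_of_notMem hz, image_eq_zero_of_notMem_tsupport hz]
  refine (hasDerivAt_integral_of_dominated_loc_of_deriv_le (Metric.ball_mem_nhds t one_pos)
    (Eventually.of_forall fun s => (hg.mul (hp.continuous.uncurry_left s)).aestronglyMeasurable)
    ((hg.mul (hp.continuous.uncurry_left t)).integrable_of_hasCompactSupport h2g.mul_right)
    (hg.mul (hdp.comp (continuous_const.prodMk continuous_id))).aestronglyMeasurable
    (Eventually.of_forall h_bound)
    ((integrableOn_const h2g.measure_lt_top.ne).integrable_indicator
      (isClosed_tsupport g).measurableSet)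
    (Eventually.of_forall fun z s _ => (hp_deriv s z).const_mul (g z))).2

end TimeDerivative

section Flow

variable {α E : Type*} [MeasurableSpace α] {ν : Measure α} [NormedAddCommGroup E]
  [NormedSpace ℝ E] [MeasurableSpace E] [BorelSpace E]

theorem hasDerivAt_integral_comp_flow_mul {v : ℝ → E → E} {X : ℝ → α → E} {g : E → ℝ}
    {p₀ : α → ℝ} {C t : ℝ} (hg : ContDiff ℝ 1 g) (h2g : HasCompactSupport g)
    (hv_bdd : ∀ s z, ‖v s z‖ ≤ C) (hv : Continuous (v t))
    (hflow : ∀ s x, HasDerivAt (fun s => X s x) (v s (X s x)) s) (hX : ∀ s, Measurable (X s))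
    (hp₀ : Integrable p₀ ν) :
    HasDerivAt (fun s => ∫ x, g (X s x) * p₀ x ∂ν)
      (∫ x, fderiv ℝ g (X t x) (v t (X t x)) * p₀ x ∂ν) t := by
  obtain ⟨Cg, hCg⟩ := hg.continuous.bounded_above_of_compact_support h2g
  obtain ⟨Kg, hKg⟩ :=
    (hg.continuous_fderiv one_ne_zero).bounded_above_of_compact_support (h2g.fderiv ℝ)
  have h_bound : ∀ x, ∀ s ∈ Metric.ball t 1,
      ‖fderiv ℝ g (X s x) (v s (X s x)) * p₀ x‖ ≤ Kg * C * ‖p₀ x‖ := by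
    intro x s _
    rw [norm_mul]
    gcongr
    calc ‖fderiv ℝ g (X s x) (v s (X s x))‖
        ≤ ‖fderiv ℝ g (X s x)‖ * ‖v s (X s x)‖ := (fderiv ℝ g (X s x)).le_opNorm _
      _ ≤ Kg * C := mul_le_mul (hKg _) (hv_bdd _ _) (norm_nonneg _)
          ((norm_nonneg _).trans (hKg 0))
  refine (hasDerivAt_integral_of_dominated_loc_of_deriv_le (Metric.ball_mem_nhds t one_pos)
    (Eventually.of_forall fun s =>
      (hg.continuous.measurable.comp (hX s)).aestronglyMeasurable.mul hp₀.1)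
    (hp₀.bdd_mul (hg.continuous.measurable.comp (hX t)).aestronglyMeasurable
      (Eventually.of_forall fun x => hCg (X t x)))
    ((((hg.continuous_fderiv one_ne_zero).clm_apply hv).measurable.comp
      (hX t)).aestronglyMeasurable.mul hp₀.1)
    (Eventually.of_forall h_bound) (hp₀.norm.const_mul (Kg * C))
    (Eventually.of_forall fun x s _ =>
      ((hg.differentiable one_ne_zero (X s x)).hasFDerivAt.comp_hasDerivAt s
        (hflow s x)).mul_const (p₀ x))).2

end Flow

section Euclidean

variable {n : ℕ}

local notation "ℝⁿ" => EuclideanSpace ℝ (Fin n)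

theorem divg_eq_sum (w : ℝⁿ → ℝⁿ) (y : ℝⁿ) :
    divg w y = ∑ i, fderiv ℝ w y (EuclideanSpace.single i 1) i := by
  rw [divg, LinearMap.trace_eq_matrix_trace ℝ (EuclideanSpace.basisFun (Fin n) ℝ).toBasis,
    Matrix.trace]
  simp [Matrix.diag, LinearMap.toMatrix_apply]

theorem divg_eq_sum_fderiv_coord {w : ℝⁿ → ℝⁿ} {y : ℝⁿ} (hw : DifferentiableAt ℝ w y) :
    divg w y = ∑ i, fderiv ℝ (fun z => w z i) y (EuclideanSpace.single i 1) := by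
  rw [divg_eq_sum]
  refine Finset.sum_congr rfl fun i _ => ?_
  have h_coord : HasFDerivAt (fun z => w z i)
      ((EuclideanSpace.proj i).comp (fderiv ℝ w y)) y :=
    (EuclideanSpace.proj (𝕜 := ℝ) i).hasFDerivAt.comp y hw.hasFDerivAt
  rw [h_coord.fderiv]
  rfl

theorem ContDiff.continuous_divg {w : ℝⁿ → ℝⁿ} (hw : ContDiff ℝ 1 w) : Continuous (divg w) := by
  simp_rw [funext (divg_eq_sum w)]
  exact continuous_finsetSum _ fun i _ => (EuclideanSpace.proj i).continuous.comp
    ((hw.continuous_fderiv one_ne_zero).clm_apply continuous_const)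

theorem divg_smul {c : ℝⁿ → ℝ} {w : ℝⁿ → ℝⁿ} {y : ℝⁿ} (hc : DifferentiableAt ℝ c y)
    (hw : DifferentiableAt ℝ w y) :
    divg (fun z => c z • w z) y = fderiv ℝ c y (w y) + c y * divg w y := by
  have hwy : w y = ∑ i, w y i • EuclideanSpace.single i (1 : ℝ) := by
    simpa using ((EuclideanSpace.basisFun (Fin n) ℝ).sum_repr (w y)).symm
  rw [divg_eq_sum, divg_eq_sum, fderiv_fun_smul hc hw, Finset.mul_sum]
  conv_rhs => rw [hwy]
  simp only [add_apply, smul_apply, ContinuousLinearMap.smulRight_apply, PiLp.add_apply,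
    PiLp.smul_apply, smul_eq_mul, mul_comm, map_sum, map_smul, ← Finset.sum_add_distrib]
  exact Finset.sum_congr rfl fun _ _ => add_comm _ _

theorem integral_divg_eq_zero {w : ℝⁿ → ℝⁿ} (hw : ContDiff ℝ 1 w) (h2w : HasCompactSupport w) :
    ∫ y, divg w y = 0 := by
  have hw_coord : ∀ i : Fin n, ContDiff ℝ 1 fun z => w z i := fun i =>
    (EuclideanSpace.proj (𝕜 := ℝ) i).contDiff.comp hw
  have h2w_coord : ∀ i : Fin n, HasCompactSupport fun z => w z i := fun i =>
    h2w.comp_left (g := fun x : ℝⁿ => x i) rfl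
  simp_rw [divg_eq_sum_fderiv_coord (hw.differentiable one_ne_zero _)]
  rw [integral_finsetSum _ fun i _ =>
    (((hw_coord i).continuous_fderiv one_ne_zero).clm_apply continuous_const)
      |>.integrable_of_hasCompactSupport ((h2w_coord i).fderiv_apply ℝ _)]
  exact Finset.sum_eq_zero fun i _ => integral_fderiv_apply_eq_zero (hw_coord i) (h2w_coord i) _

theorem integral_fderiv_apply_mul_eq_neg_integral_mul {g p : ℝⁿ → ℝ} {w : ℝⁿ → ℝⁿ}
    (hg : ContDiff ℝ 1 g) (h2g : HasCompactSupport g) (hp : ContDiff ℝ 1 p)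
    (hw : ContDiff ℝ 1 w) :
    ∫ z, fderiv ℝ g z (w z) * p z = -∫ z, g z * (fderiv ℝ p z (w z) + p z * divg w z) := by
  have h_div : ∀ z, divg (fun z => (g z * p z) • w z) z =
      fderiv ℝ g z (w z) * p z + g z * (fderiv ℝ p z (w z) + p z * divg w z) := by
    intro z
    have hg_z := hg.differentiable one_ne_zero z
    have hp_z := hp.differentiable one_ne_zero z
    rw [divg_smul (c := fun z => g z * p z) (hg_z.mul hp_z) (hw.differentiable one_ne_zero z),
      fderiv_fun_mul hg_z hp_z]
    simp only [add_apply, smul_apply, smul_eq_mul]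
    ring
  have h_zero : ∫ z, divg (fun z => (g z * p z) • w z) z = 0 :=
    integral_divg_eq_zero ((hg.mul hp).smul hw) h2g.mul_right.smul_right
  simp_rw [h_div] at h_zero
  rw [integral_add] at h_zero
  · exact eq_neg_of_add_eq_zero_left h_zero
  · exact (((hg.continuous_fderiv one_ne_zero).clm_apply hw.continuous).mul
      hp.continuous).integrable_of_hasCompactSupport ((h2g.fderiv ℝ).clm_apply w).mul_right
  · exact (hg.continuous.mul ((((hp.continuous_fderiv one_ne_zero).clm_apply hw.continuous)).add
      (hp.continuous.mul hw.continuous_divg))).integrable_of_hasCompactSupport h2g.mul_right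

noncomputable def continuityResidual (p : ℝ → ℝⁿ → ℝ) (v : ℝ → ℝⁿ → ℝⁿ) (t : ℝ) (z : ℝⁿ) : ℝ :=
  deriv (fun s => p s z) t + fderiv ℝ (p t) z (v t z) + p t z * divg (v t) z

theorem continuous_continuityResidual {p : ℝ → ℝⁿ → ℝ} {v : ℝ → ℝⁿ → ℝⁿ} {t : ℝ}
    (hp : ContDiff ℝ 1 (uncurry p)) (hv : ContDiff ℝ 1 (v t)) :
    Continuous (continuityResidual p v t) := by
  have hp_t : ContDiff ℝ 1 (p t) := hp.comp (contDiff_prodMk_right t)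
  exact ((hp.continuous_deriv_uncurry_left.comp (continuous_const.prodMk continuous_id)).add
    ((hp_t.continuous_fderiv one_ne_zero).clm_apply hv.continuous)).add
    (hp_t.continuous.mul hv.continuous_divg)

theorem integral_mul_continuityResidual_eq_zero {α : Type*} [MeasurableSpace α] {ν : Measure α}
    {v : ℝ → ℝⁿ → ℝⁿ} {X : ℝ → α → ℝⁿ} {p₀ : α → ℝ} {p : ℝ → ℝⁿ → ℝ} {g : ℝⁿ → ℝ} {C t : ℝ}
    (hv_bdd : ∀ s z, ‖v s z‖ ≤ C) (hv : ContDiff ℝ 1 (v t))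
    (hflow : ∀ s x, HasDerivAt (fun s => X s x) (v s (X s x)) s) (hX : ∀ s, Measurable (X s))
    (hp₀ : Integrable p₀ ν) (hp : ContDiff ℝ 1 (uncurry p))
    (hweak : ∀ (g : ℝⁿ → ℝ), Continuous g → HasCompactSupport g →
      ∀ t : ℝ, ∫ y, g y * p t y = ∫ x, g (X t x) * p₀ x ∂ν)
    (hg : ContDiff ℝ 1 g) (h2g : HasCompactSupport g) :
    ∫ z, g z * continuityResidual p v t z = 0 := by
  have hp_t : ContDiff ℝ 1 (p t) := hp.comp (contDiff_prodMk_right t)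
  have h_lhs := hasDerivAt_integral_mul_of_contDiff_uncurry (μ := volume) hp hg.continuous h2g t
  rw [funext (hweak g hg.continuous h2g)] at h_lhs
  have h_eq := h_lhs.unique (hasDerivAt_integral_comp_flow_mul hg h2g hv_bdd hv.continuous hflow
    hX hp₀)
  rw [← hweak _ ((hg.continuous_fderiv one_ne_zero).clm_apply hv.continuous)
    ((h2g.fderiv ℝ).clm_apply _) t, integral_fderiv_apply_mul_eq_neg_integral_mul hg h2g hp_t hv]
    at h_eq
  have h_int_time : Integrable fun z => g z * deriv (fun s => p s z) t :=
    (hg.continuous.mul (hp.continuous_deriv_uncurry_left.comp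
      (continuous_const.prodMk continuous_id))).integrable_of_hasCompactSupport h2g.mul_right
  have h_int_space :
      Integrable fun z => g z * (fderiv ℝ (p t) z (v t z) + p t z * divg (v t) z) :=
    (hg.continuous.mul (((hp_t.continuous_fderiv one_ne_zero).clm_apply hv.continuous).add
      (hp_t.continuous.mul hv.continuous_divg))).integrable_of_hasCompactSupport h2g.mul_right
  calc ∫ z, g z * continuityResidual p v t z
      = (∫ z, g z * deriv (fun s => p s z) t)
          + ∫ z, g z * (fderiv ℝ (p t) z (v t z) + p t z * divg (v t) z) := by
        rw [← integral_add h_int_time h_int_space]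
        simp only [continuityResidual, add_assoc, mul_add]
    _ = 0 := by rw [h_eq, neg_add_cancel]

end Euclidean

theorem continuity_equation_of_pushforward_density_general
    (n : ℕ)
    (v X : ℝ → EuclideanSpace ℝ (Fin n) → EuclideanSpace ℝ (Fin n))
    (hv_bdd : ∃ C : ℝ, ∀ t x, ‖v t x‖ ≤ C)
    (hv_smooth : ContDiff ℝ 1 (fun q : ℝ × EuclideanSpace ℝ (Fin n) => v q.1 q.2))
    (hflow : ∀ t x, HasDerivAt (fun s => X s x) (v t (X t x)) t)
    (hX_cont : Continuous (fun q : ℝ × EuclideanSpace ℝ (Fin n) => X q.1 q.2))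
    (p₀ : EuclideanSpace ℝ (Fin n) → ℝ) (hp₀ : Integrable p₀)
    (p : ℝ → EuclideanSpace ℝ (Fin n) → ℝ)
    (hp_smooth : ContDiff ℝ 1 (fun q : ℝ × EuclideanSpace ℝ (Fin n) => p q.1 q.2))
    (hweak : ∀ (g : EuclideanSpace ℝ (Fin n) → ℝ), Continuous g → HasCompactSupport g →
      ∀ t : ℝ, ∫ y, g y * p t y = ∫ x, g (X t x) * p₀ x) :
    ∀ (t : ℝ) (y : EuclideanSpace ℝ (Fin n)),
      deriv (fun s => p s y) t + ⟪gradient (p t) y, v t y⟫ + p t y * divg (v t) y = 0 := by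
  intro t y
  obtain ⟨C, hC⟩ := hv_bdd
  have hv_t : ContDiff ℝ 1 (v t) := hv_smooth.comp (contDiff_prodMk_right t)
  have h_residual : continuityResidual p v t = 0 :=
    (continuous_continuityResidual hp_smooth hv_t).eq_zero_of_integral_contDiff_mul_eq_zero
      (μ := volume) fun g hg h2g =>
        integral_mul_continuityResidual_eq_zero hC hv_t hflow
          (fun s => (hX_cont.uncurry_left s).measurable) hp₀ hp_smooth hweak hg h2g
  simpa [continuityResidual, inner_gradient_left] using congrFun h_residual y

theorem continuity_equation_of_pushforward_density
    (n : ℕ) (hn : 1 ≤ n)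
    (v X : ℝ → EuclideanSpace ℝ (Fin n) → EuclideanSpace ℝ (Fin n))
    (hv_bdd : ∃ C : ℝ, ∀ t x, ‖v t x‖ ≤ C)
    (hv_smooth : ContDiff ℝ 1 (fun q : ℝ × EuclideanSpace ℝ (Fin n) => v q.1 q.2))
    (hX0 : ∀ x, X 0 x = x)
    (hflow : ∀ t x, HasDerivAt (fun s => X s x) (v t (X t x)) t)
    (hX_cont : Continuous (fun q : ℝ × EuclideanSpace ℝ (Fin n) => X q.1 q.2))
    (p₀ : EuclideanSpace ℝ (Fin n) → ℝ) (hp₀ : Integrable p₀)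
    (p : ℝ → EuclideanSpace ℝ (Fin n) → ℝ)
    (hp_smooth : ContDiff ℝ 1 (fun q : ℝ × EuclideanSpace ℝ (Fin n) => p q.1 q.2))
    (hweak : ∀ (g : EuclideanSpace ℝ (Fin n) → ℝ), Continuous g → HasCompactSupport g →
      ∀ t : ℝ, ∫ y, g y * p t y = ∫ x, g (X t x) * p₀ x) :
    ∀ (t : ℝ) (y : EuclideanSpace ℝ (Fin n)),
      deriv (fun s => p s y) t + ⟪gradient (p t) y, v t y⟫ + p t y * divg (v t) y = 0 :=
  continuity_equation_of_pushforward_density_general n v X hv_bdd hv_smooth hflow hX_cont p₀ hp₀ p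
    hp_smooth hweak
end

section
/- Let n ≥ 1, let v : ℝ → ℝⁿ → ℝⁿ be bounded and twice continuously differentiable jointly in (t, x), and suppose there exists a flow X of v, continuous in (t, x), such that X(t, ·) : ℝⁿ → ℝⁿ is surjective for every t. If p, q : ℝ → ℝⁿ → ℝ are both continuously differentiable jointly in (t, y), both satisfy the continuity equation ∂u/∂t(t, y) + ∇u_t(y)·v_t(y) + u(t, y)·(∇·v_t)(y) = 0 for all (t, y), and p(0, ·) = q(0, ·), then p = q. -/
/-!
Along a trajectory `s ↦ X s x` of the flow, the chain rule turns the continuity equation into the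
linear ODE `d/ds u(s, X s x) = -(∇·v_s)(X s x) · u(s, X s x)`, whose coefficient is continuous
because `v` is jointly `C¹`. Grönwall uniqueness then forces `p - q` to vanish along every
trajectory, since it vanishes at time `0`, and by surjectivity of `X t` the trajectories reach
every point at every time `t`.
-/

open MeasureTheory
open scoped RealInnerProductSpace

open Set in
theorem eq_zero_of_hasDerivAt_eq_smul_self {E : Type*} [NormedAddCommGroup E] [NormedSpace ℝ E]
    {a : ℝ → ℝ} {g : ℝ → E} (ha : Continuous a) (hg : ∀ t, HasDerivAt g (a t • g t) t)
    (h0 : g 0 = 0) : g = 0 := by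
  funext T
  set r := |T| + 1
  obtain ⟨K, hK⟩ :=
    (isCompact_Icc (a := -r) (b := r)).exists_bound_of_continuousOn ha.continuousOn
  have hlip : ∀ t ∈ Ioo (-r) r, LipschitzOnWith K.toNNReal (fun y : E => a t • y) univ :=
    fun t ht => ((lipschitzWith_smul (a t)).weaken <| by
      rw [← NNReal.coe_le_coe, coe_nnnorm, Real.coe_toNNReal']
      exact le_max_of_le_left (hK t (Ioo_subset_Icc_self ht))).lipschitzOnWith
  refine ODE_solution_unique_of_mem_Icc hlip (t₀ := 0)
    (by constructor <;> linarith [abs_nonneg T])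
    (fun t _ => (hg t).continuousAt.continuousWithinAt) (fun t _ => hg t) (fun _ _ => mem_univ _)
    continuousOn_const (fun t _ => by simpa using hasDerivAt_const t (0 : E))
    (fun _ _ => mem_univ _) h0 ?_
  constructor <;> linarith [le_abs_self T, neg_abs_le T]

theorem hasDerivAt_along_curve {E : Type*} [NormedAddCommGroup E] [InnerProductSpace ℝ E]
    [CompleteSpace E] {F : ℝ → E → ℝ} {γ : ℝ → E} {w : E} {t : ℝ}
    (hF : DifferentiableAt ℝ (fun z : ℝ × E => F z.1 z.2) (t, γ t))
    (hγ : HasDerivAt γ w t) :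
    HasDerivAt (fun s => F s (γ s))
      (deriv (fun s => F s (γ t)) t + ⟪gradient (F t) (γ t), w⟫) t := by
  set D := fderiv ℝ (fun z : ℝ × E => F z.1 z.2) (t, γ t)
  have hD : HasFDerivAt (fun z : ℝ × E => F z.1 z.2) D (t, γ t) := hF.hasFDerivAt
  have htime : HasDerivAt (fun s => F s (γ t)) (D (1, 0)) t :=
    hD.comp_hasDerivAt (f := fun s => (s, γ t)) t
      ((hasDerivAt_id t).prodMk (hasDerivAt_const t (γ t)))
  have hspace : HasFDerivAt (F t) (D.comp (.inr ℝ ℝ E)) (γ t) :=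
    hD.comp (γ t) (hasFDerivAt_prodMk_right t (γ t))
  have hsplit : D (1, w) = D (1, 0) + D (0, w) := by
    rw [← map_add, Prod.mk_add_mk, add_zero, zero_add]
  rw [htime.deriv, inner_gradient_left, hspace.fderiv]
  have hcurve := hD.comp_hasDerivAt (f := fun s => (s, γ s)) t ((hasDerivAt_id t).prodMk hγ)
  rwa [hsplit] at hcurve

theorem continuous_divg {n : ℕ} {P : Type*} [NormedAddCommGroup P] [NormedSpace ℝ P]
    {v : P → EuclideanSpace ℝ (Fin n) → EuclideanSpace ℝ (Fin n)}
    (hv : ContDiff ℝ 1 (fun z : P × EuclideanSpace ℝ (Fin n) => v z.1 z.2)) :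
    Continuous (fun z : P × EuclideanSpace ℝ (Fin n) => divg (v z.1) z.2) := by
  have hfderiv : Continuous (fun z : P × EuclideanSpace ℝ (Fin n) => fderiv ℝ (v z.1) z.2) :=
    (ContDiff.fderiv (n := 0) (f := fun (z : P × EuclideanSpace ℝ (Fin n)) y => v z.1 y)
      (hv.comp (contDiff_fst.fst.prodMk contDiff_snd)) contDiff_snd le_rfl).continuous
  exact ((LinearMap.trace ℝ _).comp
    (ContinuousLinearMap.coeLM ℝ)).continuous_of_finiteDimensional.comp hfderiv

def SolvesContinuityEq {n : ℕ}
    (v : ℝ → EuclideanSpace ℝ (Fin n) → EuclideanSpace ℝ (Fin n))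
    (u : ℝ → EuclideanSpace ℝ (Fin n) → ℝ) : Prop :=
  ∀ t y, deriv (fun s => u s y) t + ⟪gradient (u t) y, v t y⟫ + u t y * divg (v t) y = 0

namespace SolvesContinuityEq

variable {n : ℕ} {v : ℝ → EuclideanSpace ℝ (Fin n) → EuclideanSpace ℝ (Fin n)}
  {γ : ℝ → EuclideanSpace ℝ (Fin n)}

theorem hasDerivAt_along_integralCurve {u : ℝ → EuclideanSpace ℝ (Fin n) → ℝ}
    (hu : SolvesContinuityEq v u)
    (hu_diff : Differentiable ℝ (fun z : ℝ × EuclideanSpace ℝ (Fin n) => u z.1 z.2))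
    (hγ : ∀ s, HasDerivAt γ (v s (γ s)) s) (t : ℝ) :
    HasDerivAt (fun s => u s (γ s)) (-divg (v t) (γ t) * u t (γ t)) t := by
  convert hasDerivAt_along_curve (hu_diff (t, γ t)) (hγ t) using 1
  linarith [hu t (γ t)]

theorem eq_along_integralCurve {p q : ℝ → EuclideanSpace ℝ (Fin n) → ℝ}
    (hv : ContDiff ℝ 1 (fun z : ℝ × EuclideanSpace ℝ (Fin n) => v z.1 z.2))
    (hp : SolvesContinuityEq v p) (hq : SolvesContinuityEq v q)
    (hp_diff : Differentiable ℝ (fun z : ℝ × EuclideanSpace ℝ (Fin n) => p z.1 z.2))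
    (hq_diff : Differentiable ℝ (fun z : ℝ × EuclideanSpace ℝ (Fin n) => q z.1 z.2))
    (hγ : ∀ s, HasDerivAt γ (v s (γ s)) s) (h0 : p 0 (γ 0) = q 0 (γ 0)) (t : ℝ) :
    p t (γ t) = q t (γ t) := by
  have hγ_cont : Continuous γ := continuous_iff_continuousAt.2 fun s => (hγ s).continuousAt
  have hdiff : (fun s => p s (γ s) - q s (γ s)) = 0 := by
    refine eq_zero_of_hasDerivAt_eq_smul_self (a := fun s => -divg (v s) (γ s))
      ((continuous_divg hv).comp (continuous_id.prodMk hγ_cont)).neg (fun s => ?_)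
      (sub_eq_zero.2 h0)
    rw [smul_eq_mul, mul_sub]
    exact (hp.hasDerivAt_along_integralCurve hp_diff hγ s).sub
      (hq.hasDerivAt_along_integralCurve hq_diff hγ s)
  exact sub_eq_zero.1 (congrFun hdiff t)

end SolvesContinuityEq

theorem continuity_equation_uniqueness_general
    (n : ℕ)
    (v : ℝ → EuclideanSpace ℝ (Fin n) → EuclideanSpace ℝ (Fin n))
    (hv_smooth : ContDiff ℝ 2 (fun q : ℝ × EuclideanSpace ℝ (Fin n) => v q.1 q.2))
    (hX : ∃ X : ℝ → EuclideanSpace ℝ (Fin n) → EuclideanSpace ℝ (Fin n),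
      (∀ x, X 0 x = x) ∧
      (∀ t x, HasDerivAt (fun s => X s x) (v t (X t x)) t) ∧
      Continuous (fun q : ℝ × EuclideanSpace ℝ (Fin n) => X q.1 q.2) ∧
      (∀ t, Function.Surjective (X t)))
    (p q : ℝ → EuclideanSpace ℝ (Fin n) → ℝ)
    (hp_smooth : ContDiff ℝ 1 (fun z : ℝ × EuclideanSpace ℝ (Fin n) => p z.1 z.2))
    (hq_smooth : ContDiff ℝ 1 (fun z : ℝ × EuclideanSpace ℝ (Fin n) => q z.1 z.2))
    (hp_eq : ∀ (t : ℝ) (y : EuclideanSpace ℝ (Fin n)),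
      deriv (fun s => p s y) t + ⟪gradient (p t) y, v t y⟫ + p t y * divg (v t) y = 0)
    (hq_eq : ∀ (t : ℝ) (y : EuclideanSpace ℝ (Fin n)),
      deriv (fun s => q s y) t + ⟪gradient (q t) y, v t y⟫ + q t y * divg (v t) y = 0)
    (h0 : p 0 = q 0) :
    p = q := by
  obtain ⟨X, hX0, hX_flow, -, hX_surj⟩ := hX
  funext t y
  obtain ⟨x, rfl⟩ := hX_surj t y
  exact SolvesContinuityEq.eq_along_integralCurve (hv_smooth.of_le one_le_two) hp_eq hq_eq
    (hp_smooth.differentiable one_ne_zero) (hq_smooth.differentiable one_ne_zero)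
    (fun s => hX_flow s x) (by simp [hX0, h0]) t

theorem continuity_equation_uniqueness
    (n : ℕ) (hn : 1 ≤ n)
    (v : ℝ → EuclideanSpace ℝ (Fin n) → EuclideanSpace ℝ (Fin n))
    (hv_bdd : ∃ C : ℝ, ∀ t x, ‖v t x‖ ≤ C)
    (hv_smooth : ContDiff ℝ 2 (fun q : ℝ × EuclideanSpace ℝ (Fin n) => v q.1 q.2))
    (hX : ∃ X : ℝ → EuclideanSpace ℝ (Fin n) → EuclideanSpace ℝ (Fin n),
      (∀ x, X 0 x = x) ∧
      (∀ t x, HasDerivAt (fun s => X s x) (v t (X t x)) t) ∧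
      Continuous (fun q : ℝ × EuclideanSpace ℝ (Fin n) => X q.1 q.2) ∧
      (∀ t, Function.Surjective (X t)))
    (p q : ℝ → EuclideanSpace ℝ (Fin n) → ℝ)
    (hp_smooth : ContDiff ℝ 1 (fun z : ℝ × EuclideanSpace ℝ (Fin n) => p z.1 z.2))
    (hq_smooth : ContDiff ℝ 1 (fun z : ℝ × EuclideanSpace ℝ (Fin n) => q z.1 z.2))
    (hp_eq : ∀ (t : ℝ) (y : EuclideanSpace ℝ (Fin n)),
      deriv (fun s => p s y) t + ⟪gradient (p t) y, v t y⟫ + p t y * divg (v t) y = 0)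
    (hq_eq : ∀ (t : ℝ) (y : EuclideanSpace ℝ (Fin n)),
      deriv (fun s => q s y) t + ⟪gradient (q t) y, v t y⟫ + q t y * divg (v t) y = 0)
    (h0 : p 0 = q 0) :
    p = q :=
  continuity_equation_uniqueness_general n v hv_smooth hX p q hp_smooth hq_smooth hp_eq hq_eq h0
end
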